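/- Let P be an (s,k)-puzzle that is a strong uniquely solvable puzzle and let h satisfy 2 ≤ h ≤ s. Then every subset P' ⊆ P with |P'| = h is a strong uniquely solvable puzzle; that is, the rows of P form a clique of size s in the h-uniform hypergraph on vertex set {1,2,3}^k whose hyperedges are the size-h subsets of {1,2,3}^k that are strong uniquely solvable puzzles. -/

import Mathlib

/-- Exactly two of the three propositions hold. -/
def ExactlyTwo (A B C : Prop) : Prop :=
  (A ∧ B ∧ ¬C) ∨ (A ∧ ¬B ∧ C) ∨ (¬A ∧ B ∧ C)

/-- At least two of the three propositions hold. -/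
def AtLeastTwo (A B C : Prop) : Prop :=
  (A ∧ B) ∨ (A ∧ C) ∨ (B ∧ C)

/-- A puzzle of width `k` is a finite set of rows in `{1,2,3}^k`; we use the
alphabet `Fin 3` whose three elements are denoted `1`, `2`, `3` (`3 = 0`).
`P` is a strong uniquely solvable puzzle (strong USP). -/
def IsSUSP {k : ℕ} (P : Finset (Fin k → Fin 3)) : Prop :=
  ∀ π₁ π₂ π₃ : Equiv.Perm {r // r ∈ P},
    (π₁ = π₂ ∧ π₂ = π₃) ∨
    ∃ (r : {r // r ∈ P}) (c : Fin k),
      ExactlyTwo ((π₁ r).1 c = 1) ((π₂ r).1 c = 2) ((π₃ r).1 c = 3)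

/-!
A sub-puzzle inherits strong unique solvability: three permutations of `P' ⊆ P` extend to
permutations of `P` fixing every row outside `P'`, and a witness `(r, c)` for the extensions
cannot have `r ∉ P'`, since then the three conditions read `r c = 1`, `r c = 2`, `r c = 3`,
no two of which hold together.
-/

theorem not_exactlyTwo_eq_one_eq_two_eq_three (x : Fin 3) :
    ¬ExactlyTwo (x = 1) (x = 2) (x = 3) := by
  unfold ExactlyTwo
  fin_cases x <;> decide

namespace Finset

variable {α : Type*} [DecidableEq α] {s t : Finset α}

def extendPerm (hts : t ⊆ s) (π : Equiv.Perm {a // a ∈ t}) : Equiv.Perm {a // a ∈ s} :=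
  π.extendDomain (Equiv.subtypeSubtypeEquivSubtype (p := (· ∈ s)) (q := (· ∈ t)) (hts ·)).symm

theorem extendPerm_injective (hts : t ⊆ s) : Function.Injective (extendPerm hts) :=
  Equiv.Perm.extendDomainHom_injective _

theorem extendPerm_apply_of_mem (hts : t ⊆ s) (π : Equiv.Perm {a // a ∈ t})
    {a : {a // a ∈ s}} (ha : a.1 ∈ t) : (extendPerm hts π a).1 = (π ⟨a.1, ha⟩).1 :=
  congrArg Subtype.val (π.extendDomain_apply_image _ ⟨a.1, ha⟩)

theorem extendPerm_apply_of_notMem (hts : t ⊆ s) (π : Equiv.Perm {a // a ∈ t})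
    {a : {a // a ∈ s}} (ha : a.1 ∉ t) : extendPerm hts π a = a :=
  Equiv.Perm.extendDomain_apply_not_subtype π _ ha

end Finset

open Finset in
theorem IsSUSP.of_subset {k : ℕ} {P P' : Finset (Fin k → Fin 3)} (hP : IsSUSP P)
    (hsub : P' ⊆ P) : IsSUSP P' := by
  intro π₁ π₂ π₃
  rcases hP (extendPerm hsub π₁) (extendPerm hsub π₂) (extendPerm hsub π₃) with
    ⟨h₁₂, h₂₃⟩ | ⟨r, c, hrc⟩
  · exact .inl ⟨extendPerm_injective hsub h₁₂, extendPerm_injective hsub h₂₃⟩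
  by_cases hr : r.1 ∈ P'
  · refine .inr ⟨⟨r.1, hr⟩, c, ?_⟩
    simpa only [extendPerm_apply_of_mem hsub _ hr] using hrc
  · simp only [extendPerm_apply_of_notMem hsub _ hr] at hrc
    exact absurd hrc (not_exactlyTwo_eq_one_eq_two_eq_three _)

theorem susp_clique_bound_general {k : ℕ} (P : Finset (Fin k → Fin 3))
    (hP : IsSUSP P) (h : ℕ) :
    ∀ P' ⊆ P, P'.card = h → IsSUSP P' := by
  exact fun _ hsub _ => hP.of_subset hsub

/-- Clique bound: if `P` is an `(s,k)` strong USP and `2 ≤ h ≤ s`, then every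
size-`h` subset of `P` is a strong USP, i.e. the rows of `P` form a clique of
size `s` in the `h`-uniform hypergraph on vertex set `{1,2,3}^k` whose
hyperedges are the size-`h` strong USPs. -/
theorem susp_clique_bound {k : ℕ} (P : Finset (Fin k → Fin 3))
    (hP : IsSUSP P) (h : ℕ) (h2 : 2 ≤ h) (hs : h ≤ P.card) :
    ∀ P' ⊆ P, P'.card = h → IsSUSP P' :=
  susp_clique_bound_general P hP h
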